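/- Let a be a real number. The inequality ∑_{j=1}^n C(n + a − j, n − j) sin(jx) > 0 holds for all integers n ≥ 1 and all x ∈ (0, π) if and only if a ≥ 1. -/

import Mathlib

open Real Finset

/-- Generalized binomial coefficient `(a + k choose k) = ∏_{ν=1}^{k} (a+ν)/ν`. -/
noncomputable def gbinom (a : ℝ) (k : ℕ) : ℝ := ∏ ν ∈ Finset.Icc 1 k, (a + ν) / ν

/-- `S n a x = ∑_{j=1}^n C(n+a−j, n−j) sin(jx)`. -/
noncomputable def S (n : ℕ) (a : ℝ) (x : ℝ) : ℝ :=
  ∑ j ∈ Finset.Icc 1 n, gbinom a (n - j) * Real.sin (j * x)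

lemma gbinom_zero (a : ℝ) : gbinom a 0 = 1 := by simp [gbinom]

lemma gbinom_succ (a : ℝ) (k : ℕ) :
    gbinom a (k+1) = gbinom a k * ((a + (k+1)) / (k+1)) := by
  rw [gbinom, gbinom, Finset.prod_Icc_succ_top (Nat.succ_le_succ (Nat.zero_le k))]
  push_cast; ring

lemma gbinom_pos (a : ℝ) (ha : 1 ≤ a) (k : ℕ) : 0 < gbinom a k := by
  induction k with
  | zero => simp [gbinom_zero]
  | succ k ih =>
    rw [gbinom_succ]
    have h1 : (0:ℝ) < a + (k+1) := by push_cast; linarith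
    have h2 : (0:ℝ) < (k:ℝ)+1 := by positivity
    positivity

noncomputable def D (n : ℕ) (x : ℝ) : ℝ := ∑ k ∈ Finset.Icc 1 n, Real.sin (k * x)
noncomputable def F (n : ℕ) (x : ℝ) : ℝ := ∑ m ∈ Finset.Icc 1 n, D m x

lemma abs_sin_le (x : ℝ) (hs : 0 ≤ Real.sin x) (m : ℕ) : |Real.sin (m * x)| ≤ m * Real.sin x := by
  induction m with
  | zero => simp
  | succ m ih =>
    have h : ((m:ℝ)+1) * x = m * x + x := by ring
    push_cast
    rw [h, Real.sin_add]
    have b1 : |Real.sin (m*x) * Real.cos x| ≤ |Real.sin (m*x)| := by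
      rw [abs_mul]
      nlinarith [abs_cos_le_one x, abs_nonneg (Real.sin ((m:ℝ)*x))]
    have b2 : |Real.cos (m*x) * Real.sin x| ≤ Real.sin x := by
      rw [abs_mul, abs_of_nonneg hs]
      nlinarith [abs_cos_le_one ((m:ℝ)*x)]
    calc |Real.sin (m*x) * Real.cos x + Real.cos (m*x) * Real.sin x|
        ≤ |Real.sin (m*x) * Real.cos x| + |Real.cos (m*x) * Real.sin x| := abs_add_le _ _
      _ ≤ m * Real.sin x + Real.sin x := by push_cast at ih; linarith
      _ = ((m:ℝ)+1) * Real.sin x := by ring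

lemma sin_lt_mul (x : ℝ) (hx : x ∈ Set.Ioo 0 Real.pi) (m : ℕ) (hm : 2 ≤ m) :
    Real.sin (m * x) < m * Real.sin x := by
  obtain ⟨hx0, hxp⟩ := hx
  have hs : 0 < Real.sin x := Real.sin_pos_of_pos_of_lt_pi hx0 hxp
  have hc2 : Real.cos x ^ 2 < 1 := by nlinarith [Real.sin_sq_add_cos_sq x]
  have hac : |Real.cos x| < 1 := by
    rw [abs_lt]; constructor <;> nlinarith
  obtain ⟨k, rfl⟩ : ∃ k, m = k + 1 := ⟨m - 1, by omega⟩
  have hk : 1 ≤ k := by omega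
  have h : ((k:ℝ)+1) * x = k * x + x := by ring
  have hb := abs_sin_le x hs.le k
  push_cast
  rw [h, Real.sin_add]
  rcases eq_or_ne (Real.sin ((k:ℝ) * x)) 0 with h0 | h0
  · rw [h0]
    have : Real.cos ((k:ℝ)*x) * Real.sin x ≤ 1 * Real.sin x := by
      nlinarith [Real.cos_le_one ((k:ℝ)*x)]
    have hk1 : (1:ℝ) ≤ k := by exact_mod_cast hk
    nlinarith
  · have h1 : Real.sin ((k:ℝ)*x) * Real.cos x < |Real.sin ((k:ℝ)*x)| := by
      calc Real.sin ((k:ℝ)*x) * Real.cos x ≤ |Real.sin ((k:ℝ)*x) * Real.cos x| := le_abs_self _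
        _ = |Real.sin ((k:ℝ)*x)| * |Real.cos x| := abs_mul _ _
        _ < |Real.sin ((k:ℝ)*x)| * 1 := by
            have : 0 < |Real.sin ((k:ℝ)*x)| := abs_pos.mpr h0
            exact mul_lt_mul_of_pos_left hac this
        _ = |Real.sin ((k:ℝ)*x)| := mul_one _
    have h2 : Real.cos ((k:ℝ)*x) * Real.sin x ≤ 1 * Real.sin x := by
      nlinarith [Real.cos_le_one ((k:ℝ)*x)]
    nlinarith

lemma D_eq (x : ℝ) (n : ℕ) :
    2 * (1 - Real.cos x) * D n x = Real.sin x + Real.sin (n * x) - Real.sin ((n+1) * x) := by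
  induction n with
  | zero => simp [D]
  | succ n ih =>
    rw [D, Finset.sum_Icc_succ_top (Nat.succ_le_succ (Nat.zero_le n)), ← D]
    have e1 : ((n:ℝ)+1+1) * x = (n+1) * x + x := by ring
    have e2 : ((n:ℝ)) * x = (n+1) * x - x := by ring
    push_cast
    push_cast at ih
    rw [e1, Real.sin_add]
    rw [e2, Real.sin_sub] at ih
    nlinarith [ih]

lemma F_eq (x : ℝ) (n : ℕ) :
    2 * (1 - Real.cos x) * F n x = (n+1) * Real.sin x - Real.sin ((n+1) * x) := by
  induction n with
  | zero => simp [F]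
  | succ n ih =>
    rw [F, Finset.sum_Icc_succ_top (Nat.succ_le_succ (Nat.zero_le n)), ← F]
    have hd := D_eq x (n+1)
    push_cast at hd ih ⊢
    nlinarith [hd, ih]

lemma F_pos (x : ℝ) (hx : x ∈ Set.Ioo 0 Real.pi) (n : ℕ) (hn : 1 ≤ n) : 0 < F n x := by
  have h := F_eq x n
  have hc : Real.cos x < 1 := by
    have hs : 0 < Real.sin x := Real.sin_pos_of_pos_of_lt_pi hx.1 hx.2
    nlinarith [Real.sin_sq_add_cos_sq x, Real.cos_le_one x]
  have hlt := sin_lt_mul x hx (n+1) (by omega)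
  push_cast at hlt h
  nlinarith

lemma abel_sum (u v : ℕ → ℝ) (n : ℕ) :
    ∑ j ∈ Finset.Icc 1 n, u j * v j =
      ∑ j ∈ Finset.Icc 1 n, (u j - u (j+1)) * (∑ m ∈ Finset.Icc 1 j, v m)
        + u (n+1) * (∑ m ∈ Finset.Icc 1 n, v m) := by
  induction n with
  | zero => simp
  | succ n ih =>
    rw [Finset.sum_Icc_succ_top (Nat.succ_le_succ (Nat.zero_le n)),
        Finset.sum_Icc_succ_top (Nat.succ_le_succ (Nat.zero_le n)), ih,
        Finset.sum_Icc_succ_top (Nat.succ_le_succ (Nat.zero_le n))]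
    ring

lemma gbinom_one (a : ℝ) : gbinom a 1 = a + 1 := by
  rw [show (1:ℕ) = 0+1 from rfl, gbinom_succ, gbinom_zero]
  norm_num

lemma d_interior (a : ℝ) (ha : 1 ≤ a) (m : ℕ) :
    0 ≤ gbinom a (m+2) - 2 * gbinom a (m+1) + gbinom a m := by
  have hb := gbinom_pos a ha m
  have h1 : gbinom a (m+1) = gbinom a m * ((a+((m:ℝ)+1))/((m:ℝ)+1)) := by
    rw [gbinom_succ]; all_goals (push_cast; ring)
  have h2 : gbinom a (m+2) = gbinom a m * ((a+((m:ℝ)+1))/((m:ℝ)+1)) * ((a+((m:ℝ)+2))/((m:ℝ)+2)) := by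
    rw [show m+2 = (m+1)+1 from rfl, gbinom_succ, h1]; all_goals (push_cast; ring)
  have hm1 : ((m:ℝ)+1) ≠ 0 := by positivity
  have hm2 : ((m:ℝ)+2) ≠ 0 := by positivity
  have key : gbinom a (m+2) - 2 * gbinom a (m+1) + gbinom a m
      = gbinom a m * (a*(a-1)) / (((m:ℝ)+1)*((m:ℝ)+2)) := by
    rw [h2, h1]; field_simp; ring
  rw [key]
  have h3 : 0 ≤ a*(a-1) := by nlinarith
  positivity

lemma S_pos (a : ℝ) (ha : 1 ≤ a) (n : ℕ) (hn : 1 ≤ n) (x : ℝ)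
    (hx : x ∈ Set.Ioo 0 Real.pi) : 0 < S n a x := by
  classical
  set c : ℕ → ℝ := fun j => if j ≤ n then gbinom a (n - j) else 0 with hc
  have hS : S n a x = ∑ j ∈ Finset.Icc 1 n, c j * Real.sin (j * x) := by
    apply Finset.sum_congr rfl
    intro j hj
    rw [Finset.mem_Icc] at hj
    simp [hc, hj.2]
  have hcn1 : c (n+1) = 0 := by simp only [hc]; rw [if_neg (by omega)]
  have hcn2 : c (n+2) = 0 := by simp only [hc]; rw [if_neg (by omega)]
  have h1 : S n a x = ∑ j ∈ Finset.Icc 1 n, (c j - c (j+1)) * D j x := by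
    rw [hS, abel_sum c (fun k => Real.sin (k * x)) n, hcn1]
    simp [D]
  have h2 : S n a x
      = ∑ j ∈ Finset.Icc 1 n, ((c j - c (j+1)) - (c (j+1) - c (j+2))) * F j x := by
    rw [h1, abel_sum (fun j => c j - c (j+1)) (fun j => D j x) n]
    simp [F, hcn1, hcn2]
  rw [h2]
  apply Finset.sum_pos'
  · intro j hj
    rw [Finset.mem_Icc] at hj
    have hF := F_pos x hx j hj.1
    have hd : 0 ≤ (c j - c (j+1)) - (c (j+1) - c (j+2)) := by
      obtain ⟨k, hk⟩ : ∃ k, n = j + k := ⟨n - j, by omega⟩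
      have e0 : c j = gbinom a k := by
        simp only [hc]; rw [if_pos (by omega)]; congr 1; omega
      rcases k with _ | _ | m
      · have e1 : c (j+1) = 0 := by simp only [hc]; rw [if_neg (by omega)]
        have e2 : c (j+2) = 0 := by simp only [hc]; rw [if_neg (by omega)]
        rw [e0, e1, e2, gbinom_zero]; norm_num
      · have e1 : c (j+1) = gbinom a 0 := by
          simp only [hc]; rw [if_pos (by omega)]; congr 1; omega
        have e2 : c (j+2) = 0 := by simp only [hc]; rw [if_neg (by omega)]
        rw [e0, e1, e2, gbinom_zero, gbinom_one]; linarith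
      · have e1 : c (j+1) = gbinom a (m+1) := by
          simp only [hc]; rw [if_pos (by omega)]; congr 1; omega
        have e2 : c (j+2) = gbinom a m := by
          simp only [hc]; rw [if_pos (by omega)]; congr 1; omega
        rw [e0, e1, e2]
        have := d_interior a ha m; linarith
    exact mul_nonneg hd hF.le
  · refine ⟨n, Finset.mem_Icc.mpr ⟨hn, le_refl n⟩, ?_⟩
    have e0 : c n = 1 := by
      simp only [hc]; rw [if_pos le_rfl]; simp [gbinom_zero]
    rw [e0, hcn1, hcn2]
    simpa using F_pos x hx n hn

theorem stmt_9 (a : ℝ) :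
    (∀ n : ℕ, 1 ≤ n → ∀ x ∈ Set.Ioo 0 Real.pi, 0 < S n a x) ↔ 1 ≤ a := by
  constructor
  · intro h
    by_contra h'
    push_neg at h'
    set t := min 1 (-(a+1)/2) with ht
    have ht1 : -1 < t := by
      apply lt_min
      · norm_num
      · linarith
    have ht2 : t ≤ -(a+1)/2 := min_le_right _ _
    have ht3 : t ≤ 1 := min_le_left _ _
    set cθ := (t - 1)/2 with hcθ
    have hc1 : -1 < cθ := by rw [hcθ]; linarith
    have hc2 : cθ < 1 := by rw [hcθ]; linarith
    set x := Real.arccos cθ with hxdef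
    have hx : x ∈ Set.Ioo 0 Real.pi :=
      ⟨Real.arccos_pos.mpr hc2, lt_of_le_of_ne (Real.arccos_le_pi cθ) (fun he => by have := Real.arccos_eq_pi.mp he; linarith)⟩
    have hcos : Real.cos x = cθ := Real.cos_arccos hc1.le hc2.le
    have hs : 0 < Real.sin x := Real.sin_pos_of_pos_of_lt_pi hx.1 hx.2
    have hI : Finset.Icc 1 2 = ({1, 2} : Finset ℕ) := by decide
    have hS2 : S 2 a x = Real.sin x * (a + t) := by
      rw [S, hI, Finset.sum_insert (by decide), Finset.sum_singleton]
      norm_num [gbinom_zero, gbinom_one]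
      rw [Real.sin_two_mul, hcos, hcθ]
      ring
    have hpos := h 2 (by norm_num) x hx
    rw [hS2] at hpos
    nlinarith
  · intro ha n hn x hx
    exact S_pos a ha n hn x hx
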